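/- arXiv:math/9902131 — 2 statements merged into one kernel-verified Lean document; each statement's English description precedes it below -/
import Mathlib

section
/- Assume in addition W ≠ V (so that W^⊥ ≠ 0). Then every eigenvalue of A is < 1 if and only if U ∩ W contains a timelike vector (equivalently, B restricted to U ∩ W is pseudo-euclidean). -/
noncomputable section

/-- The Minkowski bilinear form of index 1 on `ℝ^{n+2}`:
`B x y = ∑_{i=0}^{n} x i * y i − x (n+1) * y (n+1)`. -/
def mB (n : ℕ) : (Fin (n+2) → ℝ) →ₗ[ℝ] (Fin (n+2) → ℝ) →ₗ[ℝ] ℝ :=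
  LinearMap.mk₂ ℝ
    (fun x y => ∑ i : Fin (n+2), (if (i : ℕ) = n+1 then (-1:ℝ) else 1) * x i * y i)
    (fun x x' y => by
      rw [← Finset.sum_add_distrib]
      exact Finset.sum_congr rfl fun i _ => by simp only [Pi.add_apply]; ring)
    (fun c x y => by
      rw [smul_eq_mul, Finset.mul_sum]
      exact Finset.sum_congr rfl fun i _ => by simp only [Pi.smul_apply, smul_eq_mul]; ring)
    (fun x y y' => by
      rw [← Finset.sum_add_distrib]
      exact Finset.sum_congr rfl fun i _ => by simp only [Pi.add_apply]; ring)
    (fun c x y => by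
      rw [smul_eq_mul, Finset.mul_sum]
      exact Finset.sum_congr rfl fun i _ => by simp only [Pi.smul_apply, smul_eq_mul]; ring)

/-- The orthogonal complement `S^⊥ = {x | ∀ s ∈ S, B x s = 0}` w.r.t. the Minkowski form. -/
def mperp (n : ℕ) (S : Submodule ℝ (Fin (n+2) → ℝ)) : Submodule ℝ (Fin (n+2) → ℝ) where
  carrier := {x | ∀ s ∈ S, mB n x s = 0}
  zero_mem' := fun s _ => by simp
  add_mem' := fun ha hb s hs => by simp [ha s hs, hb s hs]
  smul_mem' := fun c a ha s hs => by simp [ha s hs]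

/-- A subspace is pseudo-euclidean if the Minkowski form restricted to it
is nondegenerate and it contains a timelike vector. -/
def IsPseudoEuclidean (n : ℕ) (S : Submodule ℝ (Fin (n+2) → ℝ)) : Prop :=
  (∀ x ∈ S, (∀ y ∈ S, mB n x y = 0) → x = 0) ∧ ∃ x ∈ S, mB n x x < 0

/-! ### Auxiliary lemmas -/

lemma mB_apply (n : ℕ) (x y : Fin (n+2) → ℝ) :
    mB n x y = ∑ i : Fin (n+2), (if (i : ℕ) = n+1 then (-1:ℝ) else 1) * x i * y i := rfl

lemma mB_symm (n : ℕ) (x y : Fin (n+2) → ℝ) : mB n x y = mB n y x := by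
  rw [mB_apply, mB_apply]
  exact Finset.sum_congr rfl fun i _ => by ring

lemma mem_mperp {n : ℕ} {S : Submodule ℝ (Fin (n+2) → ℝ)} {x : Fin (n+2) → ℝ} :
    x ∈ mperp n S ↔ ∀ s ∈ S, mB n x s = 0 := Iff.rfl

lemma mB_split (n : ℕ) (x y : Fin (n+2) → ℝ) :
    mB n x y = (∑ i ∈ Finset.univ.erase (Fin.last (n+1)), x i * y i)
      - x (Fin.last (n+1)) * y (Fin.last (n+1)) := by
  rw [mB_apply, ← Finset.add_sum_erase _ _ (Finset.mem_univ (Fin.last (n+1)))]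
  have h1 : ((Fin.last (n+1) : Fin (n+2)) : ℕ) = n+1 := rfl
  rw [if_pos h1]
  have h2 : ∑ i ∈ Finset.univ.erase (Fin.last (n+1)),
      (if (i : ℕ) = n+1 then (-1:ℝ) else 1) * x i * y i
      = ∑ i ∈ Finset.univ.erase (Fin.last (n+1)), x i * y i := by
    refine Finset.sum_congr rfl fun i hi => ?_
    have hne : i ≠ Fin.last (n+1) := Finset.ne_of_mem_erase hi
    have hiv : (i : ℕ) ≠ n+1 := fun h => hne (by apply Fin.ext; rw [h]; exact h1.symm)
    rw [if_neg hiv]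
    ring
  rw [h2]
  ring

/-- Key Lorentzian fact: the orthogonal complement of a timelike vector is positive
definite. -/
lemma timelike_perp {n : ℕ} {t x : Fin (n+2) → ℝ}
    (ht : mB n t t < 0) (hxt : mB n x t = 0) (hx : x ≠ 0) : 0 < mB n x x := by
  set L := Fin.last (n+1) with hL
  set s := Finset.univ.erase L with hs
  have hxts := mB_split n x t
  have htts := mB_split n t t
  have hxxs := mB_split n x x
  rw [hxt] at hxts
  have CS : (∑ i ∈ s, x i * t i)^2 ≤ (∑ i ∈ s, x i * x i) * (∑ i ∈ s, t i * t i) := by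
    simpa [sq] using Finset.sum_mul_sq_le_sq_mul_sq s x t
  have ha : (0:ℝ) ≤ ∑ i ∈ s, x i * x i := Finset.sum_nonneg fun i _ => mul_self_nonneg _
  have hb : (0:ℝ) ≤ ∑ i ∈ s, t i * t i := Finset.sum_nonneg fun i _ => mul_self_nonneg _
  by_cases hxL : x L = 0
  · rw [hxxs, hxL]
    have hapos : 0 < ∑ i ∈ s, x i * x i := by
      rcases ha.lt_or_eq with h | h
      · exact h
      · exfalso
        apply hx
        funext i
        by_cases hi : i = L
        · rw [hi]; exact hxL
        · have hmem : i ∈ s := Finset.mem_erase.mpr ⟨hi, Finset.mem_univ i⟩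
          have := (Finset.sum_eq_zero_iff_of_nonneg (fun j _ => mul_self_nonneg (x j))).mp
            h.symm i hmem
          exact mul_self_eq_zero.mp this
    nlinarith
  · have hxL2 : 0 < x L * x L := mul_self_pos.mpr hxL
    rw [hxxs]
    by_contra hcon
    push_neg at hcon
    have h5 : ∑ i ∈ s, x i * x i ≤ x L * x L := by rw [hL]; linarith [hcon]
    have hσ : ∑ i ∈ s, x i * t i = x L * t L := by rw [hL]; linarith [hxts]
    have h6 : ∑ i ∈ s, t i * t i < t L * t L := by rw [hL]; linarith [htts, ht]
    have hσ2 : (∑ i ∈ s, x i * t i)^2 = (x L * x L) * (t L * t L) := by rw [hσ]; ring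
    linarith [CS, hσ2, mul_lt_mul_of_pos_left h6 hxL2, mul_le_mul_of_nonneg_right h5 hb]

open scoped RealInnerProductSpace in
/-- Abstract finite-dimensional fact: a symmetric operator for a positive definite
symmetric bilinear form whose Rayleigh quotient is `≥ 1` somewhere has an
eigenvalue `≥ 1`. -/
lemma exists_eigen_ge_one {E : Type} [AddCommGroup E] [Module ℝ E] [FiniteDimensional ℝ E]
    (Φ : E →ₗ[ℝ] E →ₗ[ℝ] ℝ) (hΦs : ∀ x y, Φ x y = Φ y x) (hΦp : ∀ x, x ≠ 0 → 0 < Φ x x)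
    (T : E →ₗ[ℝ] E) (hTs : ∀ x y, Φ (T x) y = Φ x (T y))
    (v : E) (hv : v ≠ 0) (hray : Φ v v ≤ Φ (T v) v) :
    ∃ μ : ℝ, 1 ≤ μ ∧ ∃ w : E, w ≠ 0 ∧ T w = μ • w := by
  letI c : InnerProductSpace.Core ℝ E :=
    { inner := fun x y => Φ x y
      conj_inner_symm := fun x y => by simpa using hΦs y x
      re_inner_nonneg := fun x => by
        by_cases hx : x = 0
        · simp [hx]
        · exact le_of_lt (by simpa using hΦp x hx)
      add_left := fun x y z => by simp
      smul_left := fun x y r => by simp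
      definite := fun x hx => by
        by_contra h
        exact (hΦp x h).ne' (by simpa using hx) }
  letI : NormedAddCommGroup E := c.toNormedAddCommGroup
  letI : InnerProductSpace ℝ E := InnerProductSpace.ofCore c.toCore
  haveI := FiniteDimensional.proper_rclike ℝ E
  have hinner : ∀ x y : E, ⟪x, y⟫ = Φ x y := fun x y => rfl
  set Tc : E →L[ℝ] E := LinearMap.toContinuousLinearMap T with hTc
  have hTcoe : (Tc : E →ₗ[ℝ] E) = T := rfl
  have hsym : (Tc : E →ₗ[ℝ] E).IsSymmetric := by
    intro x y
    rw [hTcoe]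
    simp only [hinner]
    exact hTs x y
  have hSA : IsSelfAdjoint Tc := ContinuousLinearMap.isSelfAdjoint_iff_isSymmetric.mpr hsym
  have H₁ : IsCompact (Metric.sphere (0 : E) ‖v‖) := isCompact_sphere _ _
  have H₂ : (Metric.sphere (0 : E) ‖v‖).Nonempty := ⟨v, by simp⟩
  obtain ⟨x₀, hx₀mem, hmax⟩ :=
    H₁.exists_isMaxOn H₂ Tc.reApplyInnerSelf_continuous.continuousOn
  have hnx₀ : ‖x₀‖ = ‖v‖ := by simpa using hx₀mem
  have hx₀ne : x₀ ≠ 0 := by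
    intro h
    rw [h] at hnx₀
    simp only [norm_zero] at hnx₀
    exact hv (norm_eq_zero.mp hnx₀.symm)
  have hmax' : IsMaxOn Tc.reApplyInnerSelf (Metric.sphere (0 : E) ‖x₀‖) x₀ := by
    rwa [hnx₀]
  have hev := hSA.hasEigenvector_of_isLocalExtrOn hx₀ne (Or.inr hmax'.localize)
  set μ : ℝ := Tc.rayleighQuotient x₀ with hμdef
  have hTw : T x₀ = μ • x₀ := by
    have := hev.apply_eq_smul
    rwa [hTcoe] at this
  have hq : ∀ x : E, Tc.reApplyInnerSelf x = Φ (T x) x := fun x => rfl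
  have hnormsq : ∀ x : E, ‖x‖ ^ 2 = Φ x x := fun x => by
    rw [← hinner x x, ← real_inner_self_eq_norm_sq]
  refine ⟨μ, ?_, x₀, hx₀ne, hTw⟩
  have hvv : 0 < Φ v v := hΦp v hv
  have hge : Φ (T v) v ≤ Φ (T x₀) x₀ := by
    have := hmax (by simp : v ∈ Metric.sphere (0 : E) ‖v‖)
    simpa [hq] using this
  have hx₀x₀ : Φ x₀ x₀ = Φ v v := by
    rw [← hnormsq, ← hnormsq, hnx₀]
  have hμeq : μ = Φ (T x₀) x₀ / Φ v v := by
    rw [hμdef]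
    show Tc.reApplyInnerSelf x₀ / ‖x₀‖ ^ 2 = _
    rw [hq, hnormsq, hx₀x₀]
  rw [hμeq, le_div_iff₀ hvv]
  calc 1 * Φ v v = Φ v v := one_mul _
  _ ≤ Φ (T v) v := hray
  _ ≤ Φ (T x₀) x₀ := hge

set_option maxHeartbeats 2000000 in
/-- All eigenvalues of `A` are `< 1` iff `U ∩ W` contains a timelike vector
(i.e. `U ∩ W` is pseudo-euclidean). -/
theorem eigenvalues_lt_one_iff_timelike_inter
    (n : ℕ) (hn : 0 < n) (W U : Submodule ℝ (Fin (n+2) → ℝ))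
    (hW : IsPseudoEuclidean n W) (hU : IsPseudoEuclidean n U)
    (hsum : W ⊔ U = ⊤)
    (p p' : (Fin (n+2) → ℝ) →ₗ[ℝ] (Fin (n+2) → ℝ))
    (hp : ∀ x, p x ∈ mperp n U ∧ x - p x ∈ U)
    (hp' : ∀ x, p' x ∈ mperp n W ∧ x - p' x ∈ W)
    (hWtop : W ≠ ⊤) :
    (∀ α : ℝ, (∃ v ∈ mperp n W, v ≠ 0 ∧ p' (p v) = α • v) → α < 1) ↔
    (∃ x ∈ U ⊓ W, mB n x x < 0) := by
  classical
  obtain ⟨hWnd', tW, htWmem, htW⟩ := hW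
  obtain ⟨hUnd', tU, htUmem, htU⟩ := hU
  -- nondegeneracy in convenient form
  have hWnd : ∀ x, x ∈ W → x ∈ mperp n W → x = 0 := fun x h1 h2 =>
    hWnd' x h1 (fun y hy => h2 y hy)
  have hUnd : ∀ x, x ∈ U → x ∈ mperp n U → x = 0 := fun x h1 h2 =>
    hUnd' x h1 (fun y hy => h2 y hy)
  -- positivity on the orthocomplements
  have hWperp_pos : ∀ x, x ∈ mperp n W → x ≠ 0 → 0 < mB n x x := fun x hx hx0 =>
    timelike_perp htW (hx tW htWmem) hx0
  -- trivial intersection of the two perps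
  have hperp_inf : ∀ x, x ∈ mperp n W → x ∈ mperp n U → x = 0 := by
    intro x h1 h2
    by_contra h0
    have hxtop : x ∈ (⊤ : Submodule ℝ (Fin (n+2) → ℝ)) := trivial
    rw [← hsum] at hxtop
    obtain ⟨w, hw, u, hu, hwu⟩ := Submodule.mem_sup.mp hxtop
    have hx : mB n x x = 0 := by
      have hadd : mB n x x = mB n x w + mB n x u := by rw [← map_add, hwu]
      rw [hadd, h1 w hw, h2 u hu, add_zero]
    exact (hWperp_pos x h1 h0).ne' hx
  -- p' fixes mperp W
  have hp'fix : ∀ x, x ∈ mperp n W → p' x = x := by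
    intro x hx
    have h1 : p' x - x ∈ W := by
      have h := W.neg_mem (hp' x).2
      rwa [neg_sub] at h
    have h2 : p' x - x ∈ mperp n W := Submodule.sub_mem _ (hp' x).1 hx
    have h3 := hWnd _ h1 h2
    rw [sub_eq_zero] at h3
    exact h3
  -- adjointness of p and p'
  have hpadj : ∀ x y, mB n (p x) y = mB n x (p y) := by
    intro x y
    have e1 : mB n (p x) y = mB n (p x) (p y) := by
      have h0 : mB n (p x) (y - p y) = 0 := (hp x).1 _ (hp y).2
      have hexp : mB n (p x) (y - p y) = mB n (p x) y - mB n (p x) (p y) :=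
        map_sub (mB n (p x)) y (p y)
      linarith [h0, hexp]
    have e2 : mB n x (p y) = mB n (p x) (p y) := by
      have h0 : mB n (p y) (x - p x) = 0 := (hp y).1 _ (hp x).2
      rw [mB_symm] at h0
      have hexp : mB n (x - p x) (p y) = mB n x (p y) - mB n (p x) (p y) := by
        rw [map_sub]; rfl
      linarith [h0, hexp]
    rw [e1, e2]
  have hp'adj : ∀ x y, mB n (p' x) y = mB n x (p' y) := by
    intro x y
    have e1 : mB n (p' x) y = mB n (p' x) (p' y) := by
      have h0 : mB n (p' x) (y - p' y) = 0 := (hp' x).1 _ (hp' y).2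
      have hexp : mB n (p' x) (y - p' y) = mB n (p' x) y - mB n (p' x) (p' y) :=
        map_sub (mB n (p' x)) y (p' y)
      linarith [h0, hexp]
    have e2 : mB n x (p' y) = mB n (p' x) (p' y) := by
      have h0 : mB n (p' y) (x - p' x) = 0 := (hp' y).1 _ (hp' x).2
      rw [mB_symm] at h0
      have hexp : mB n (x - p' x) (p' y) = mB n x (p' y) - mB n (p' x) (p' y) := by
        rw [map_sub]; rfl
      linarith [h0, hexp]
    rw [e1, e2]
  -- two key computations
  have hkey1 : ∀ v, v ∈ mperp n W → mB n (p' (p v)) v = mB n (p v) (p v) := by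
    intro v hv
    rw [hp'adj (p v) v, hp'fix v hv]
    have h0 : mB n (p v) (v - p v) = 0 := (hp v).1 _ (hp v).2
    have hexp : mB n (p v) (v - p v) = mB n (p v) v - mB n (p v) (p v) :=
      map_sub (mB n (p v)) v (p v)
    linarith [h0, hexp]
  have hkey2 : ∀ v, mB n v v = mB n (p v) (p v) + mB n (v - p v) (v - p v) := by
    intro v
    have hz : mB n (p v) (v - p v) = 0 := (hp v).1 _ (hp v).2
    have hz' : mB n (v - p v) (p v) = 0 := by rw [mB_symm]; exact hz
    have hvsplit : v = p v + (v - p v) := by abel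
    calc mB n v v = mB n (p v + (v - p v)) (p v + (v - p v)) := by rw [← hvsplit]
    _ = mB n (p v) (p v) + mB n (p v) (v - p v) + (mB n (v - p v) (p v)
        + mB n (v - p v) (v - p v)) := by
        rw [map_add]
        simp only [LinearMap.add_apply, map_add]
        ring
    _ = mB n (p v) (p v) + mB n (v - p v) (v - p v) := by rw [hz, hz']; ring
  constructor
  · -- all eigenvalues < 1 → timelike vector in U ⊓ W
    intro hEig
    by_contra hNoT
    push_neg at hNoT
    -- Step 1: find v₀ ∈ W^⊥, v₀ ≠ 0, with B(v₀ - p v₀, v₀ - p v₀) ≤ 0.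
    have hstep : ∃ v₀, v₀ ∈ mperp n W ∧ v₀ ≠ 0 ∧
        mB n (v₀ - p v₀) (v₀ - p v₀) ≤ 0 := by
      by_contra hc
      push_neg at hc
      set ψ : ↥(mperp n W) →ₗ[ℝ] (Fin (n+2) → ℝ) :=
        (LinearMap.id - p) ∘ₗ (mperp n W).subtype with hψdef
      have hψapp : ∀ v : ↥(mperp n W), ψ v = ↑v - p ↑v := fun v => rfl
      set X := LinearMap.range ψ with hX
      set K := U ⊓ W with hK
      have hXU : X ≤ U := by
        rintro x ⟨v, rfl⟩
        rw [hψapp]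
        exact (hp ↑v).2
      have hψinj : Function.Injective ψ := by
        rw [← LinearMap.ker_eq_bot]
        rw [eq_bot_iff]
        rintro v hv
        have hv0 : (↑v : Fin (n+2) → ℝ) - p ↑v = 0 := hv
        rw [sub_eq_zero] at hv0
        have hmem : (↑v : Fin (n+2) → ℝ) ∈ mperp n U := hv0 ▸ (hp ↑v).1
        have := hperp_inf ↑v v.2 hmem
        simpa [Submodule.mem_bot] using Subtype.ext this
      have hXK : ∀ x ∈ X, ∀ k ∈ K, mB n x k = 0 := by
        rintro x ⟨v, rfl⟩ k hk
        rw [hψapp]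
        have h1 : mB n (↑v : Fin (n+2) → ℝ) k = 0 := v.2 k hk.2
        have h2 : mB n (p ↑v) k = 0 := (hp ↑v).1 k hk.1
        rw [map_sub]
        simp only [LinearMap.sub_apply]
        rw [h1, h2, sub_zero]
      have hXpos : ∀ x ∈ X, x ≠ 0 → 0 < mB n x x := by
        rintro x ⟨v, rfl⟩ hx0
        have hv0 : (↑v : Fin (n+2) → ℝ) ≠ 0 := by
          intro h
          apply hx0
          rw [hψapp, h]
          simp
        have := hc ↑v v.2 hv0
        rwa [hψapp]
      have hXKbot : X ⊓ K = ⊥ := by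
        rw [eq_bot_iff]
        rintro x hx
        obtain ⟨hx1, hx2⟩ := Submodule.mem_inf.mp hx
        rw [Submodule.mem_bot]
        by_contra hx0
        exact absurd (hXK x hx1 x hx2) (hXpos x hx1 hx0).ne'
      -- dimension count
      have hrank1 : Module.finrank ℝ (mperp n W) + Module.finrank ℝ W = n + 2 := by
        have hker : LinearMap.ker p' = W := by
          ext x
          constructor
          · intro hx
            have h1 : x - p' x ∈ W := (hp' x).2
            have h2 : p' x = 0 := hx
            rwa [h2, sub_zero] at h1
          · intro hx
            have h1 : p' x ∈ W := by
              have h2 : p' x = x - (x - p' x) := by abel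
              rw [h2]
              exact W.sub_mem hx (hp' x).2
            exact hWnd _ h1 (hp' x).1
        have hrange : LinearMap.range p' = mperp n W := by
          ext x
          constructor
          · rintro ⟨y, rfl⟩
            exact (hp' y).1
          · intro hx
            exact ⟨x, hp'fix x hx⟩
        have h := LinearMap.finrank_range_add_finrank_ker p'
        rw [hrange, hker] at h
        rwa [Module.finrank_fin_fun] at h
      have hrank2 : (n + 2) + Module.finrank ℝ K = Module.finrank ℝ W + Module.finrank ℝ U := by
        have h := Submodule.finrank_sup_add_finrank_inf_eq W U
        rw [hsum] at h
        rw [hK, inf_comm U W]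
        rwa [finrank_top, Module.finrank_fin_fun] at h
      have hrank3 : Module.finrank ℝ X = Module.finrank ℝ (mperp n W) :=
        LinearMap.finrank_range_of_inj hψinj
      have hrank4 : Module.finrank ℝ ↥(X ⊔ K) = Module.finrank ℝ U := by
        have h := Submodule.finrank_sup_add_finrank_inf_eq X K
        rw [hXKbot] at h
        simp only [finrank_bot, add_zero] at h
        omega
      have hXKU : X ⊔ K = U :=
        Submodule.eq_of_le_of_finrank_eq (sup_le hXU inf_le_left) hrank4
      have htUX : tU ∈ X ⊔ K := by rw [hXKU]; exact htUmem
      obtain ⟨x, hx, k, hk, hxk⟩ := Submodule.mem_sup.mp htUX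
      have hxx : 0 ≤ mB n x x := by
        by_cases h : x = 0
        · simp [h]
        · exact (hXpos x hx h).le
      have hxkperp : mB n x k = 0 := hXK x hx k hk
      have hkxperp : mB n k x = 0 := by rw [mB_symm]; exact hxkperp
      have hexp : mB n tU tU = mB n x x + mB n x k + (mB n k x + mB n k k) := by
        rw [← hxk, map_add]
        simp only [LinearMap.add_apply, map_add]
        ring
      have hkk : mB n k k < 0 := by
        rw [hxkperp, hkxperp] at hexp
        linarith [htU, hxx, hexp]
      exact absurd hkk (not_lt.mpr (hNoT k hk))
    obtain ⟨v₀, hv₀mem, hv₀ne, hv₀⟩ := hstep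
    -- Step 2: Rayleigh argument
    set E := ↥(mperp n W) with hE
    set Φ : E →ₗ[ℝ] E →ₗ[ℝ] ℝ :=
      (mB n).compl₁₂ (mperp n W).subtype (mperp n W).subtype with hΦdef
    have hΦapp : ∀ a b : E, Φ a b = mB n ↑a ↑b := fun a b => rfl
    set T : E →ₗ[ℝ] E :=
      LinearMap.codRestrict (mperp n W) ((p' ∘ₗ p) ∘ₗ (mperp n W).subtype)
        (fun v => (hp' (p ↑v)).1) with hTdef
    have hTapp : ∀ a : E, (↑(T a) : Fin (n+2) → ℝ) = p' (p ↑a) := fun a => rfl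
    have hΦs : ∀ a b : E, Φ a b = Φ b a := fun a b => mB_symm n ↑a ↑b
    have hΦp : ∀ a : E, a ≠ 0 → 0 < Φ a a := by
      intro a ha
      have hane : (↑a : Fin (n+2) → ℝ) ≠ 0 := fun h => ha (Subtype.ext h)
      exact hWperp_pos ↑a a.2 hane
    have hTs : ∀ a b : E, Φ (T a) b = Φ a (T b) := by
      intro a b
      rw [hΦapp, hΦapp, hTapp, hTapp]
      calc mB n (p' (p ↑a)) ↑b = mB n (p ↑a) (p' ↑b) := hp'adj (p ↑a) ↑b
      _ = mB n (p ↑a) ↑b := by rw [hp'fix ↑b b.2]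
      _ = mB n ↑a (p ↑b) := hpadj ↑a ↑b
      _ = mB n (p' ↑a) (p ↑b) := by rw [hp'fix ↑a a.2]
      _ = mB n ↑a (p' (p ↑b)) := hp'adj ↑a (p ↑b)
    set v₀' : E := ⟨v₀, hv₀mem⟩ with hv₀'def
    have hv₀'ne : v₀' ≠ 0 := fun h => hv₀ne (by simpa [hv₀'def] using congrArg Subtype.val h)
    have hray : Φ v₀' v₀' ≤ Φ (T v₀') v₀' := by
      rw [hΦapp, hΦapp, hTapp]
      have h1 := hkey1 v₀ hv₀mem
      have h2 := hkey2 v₀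
      have : (↑v₀' : Fin (n+2) → ℝ) = v₀ := rfl
      rw [this]
      linarith [h1, h2, hv₀]
    obtain ⟨μ, hμ, w, hw0, hTw⟩ := exists_eigen_ge_one Φ hΦs hΦp T hTs v₀' hv₀'ne hray
    have hwne : (↑w : Fin (n+2) → ℝ) ≠ 0 := fun h => hw0 (Subtype.ext h)
    have hweq : p' (p ↑w) = μ • (↑w : Fin (n+2) → ℝ) := by
      have h := congrArg Subtype.val hTw
      rw [hTapp] at h
      exact h
    have hlt := hEig μ ⟨↑w, w.2, hwne, hweq⟩
    linarith [hμ, hlt]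
  · -- timelike vector in U ⊓ W → all eigenvalues < 1
    rintro ⟨t, ht, htt⟩ α ⟨v, hv, hvne, heig⟩
    have hvt : mB n v t = 0 := hv t ht.2
    have hvv : 0 < mB n v v := timelike_perp htt hvt hvne
    have hut : mB n (v - p v) t = 0 := by
      have h2 : mB n (p v) t = 0 := (hp v).1 t ht.1
      rw [map_sub]
      simp only [LinearMap.sub_apply]
      rw [hvt, h2, sub_zero]
    have hune : v - p v ≠ 0 := by
      intro h
      rw [sub_eq_zero] at h
      have hmem : v ∈ mperp n U := h ▸ (hp v).1
      exact hvne (hperp_inf v hv hmem)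
    have huu : 0 < mB n (v - p v) (v - p v) := timelike_perp htt hut hune
    have h1 : mB n (p' (p v)) v = mB n (p v) (p v) := hkey1 v hv
    have h2 : mB n v v = mB n (p v) (p v) + mB n (v - p v) (v - p v) := hkey2 v
    have h3 : mB n (p' (p v)) v = α * mB n v v := by
      rw [heig, LinearMap.map_smul₂, smul_eq_mul]
    have h5 : α * mB n v v < 1 * mB n v v := by
      rw [one_mul]
      linarith [h1, h2, h3, huu]
    exact lt_of_mul_lt_mul_right h5 hvv.le
end
end

section
/- Let W and U be pseudo-euclidean subspaces of V with W + U = V, W ≠ V and U ≠ V. If B is positive definite on U ∩ W (i.e. B x x > 0 for every nonzero x ∈ U ∩ W; this includes the case U ∩ W = 0), then there exist vectors n ∈ W^⊥ and m ∈ U^⊥ with B n n = 1, B m m = 1 and (B n m)² > 1; that is, the subspheres defined by W and U can be separated by a pair of disjoint hyperspheres S(n) ⊇ S₁ and S(m) ⊇ S₂. -/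
noncomputable section

lemma mB_decomp (n : ℕ) (x y : Fin (n+2) → ℝ) :
    mB n x y = (∑ i : Fin (n+1), x i.castSucc * y i.castSucc)
      - x (Fin.last (n+1)) * y (Fin.last (n+1)) := by
  rw [mB_apply, Fin.sum_univ_castSucc]
  rw [sub_eq_add_neg]
  congr 1
  · exact Finset.sum_congr rfl fun i _ => by
      rw [if_neg (show ((i.castSucc : Fin (n+2)) : ℕ) ≠ n+1 by
        simpa using i.isLt.ne)]; ring
  · rw [if_pos (by simp : ((Fin.last (n+1) : Fin (n+2)) : ℕ) = n+1)]; ring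

lemma mB_nondeg (n : ℕ) : LinearMap.BilinForm.Nondegenerate (mB n) := by
  have hL : LinearMap.SeparatingLeft (mB n) := by
    intro x hx
    ext i
    have := hx (Pi.single i 1)
    rw [mB_apply] at this
    simp only [Pi.single_apply, mul_ite, mul_one, mul_zero] at this
    rw [Finset.sum_ite_eq' Finset.univ i] at this
    simp only [Finset.mem_univ, if_true] at this
    by_cases h : (i : ℕ) = n+1
    · rw [if_pos h] at this; simpa using this
    · rw [if_neg h] at this; simpa using this
  exact ⟨hL, fun y hy => hL y fun x => by rw [mB_symm]; exact hy x⟩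

/-- Anything nonzero orthogonal to a timelike vector is spacelike. -/
lemma spacelike_of_ortho_timelike (n : ℕ) (t x : Fin (n+2) → ℝ)
    (htt : mB n t t < 0) (htx : mB n t x = 0) (hx : x ≠ 0) : 0 < mB n x x := by
  set A := ∑ i : Fin (n+1), t i.castSucc ^ 2 with hA
  set Bs := ∑ i : Fin (n+1), x i.castSucc ^ 2 with hB
  have hAnn : 0 ≤ A := Finset.sum_nonneg fun i _ => sq_nonneg _
  have hBnn : 0 ≤ Bs := Finset.sum_nonneg fun i _ => sq_nonneg _
  have h1 : A - t (Fin.last (n+1)) ^ 2 < 0 := by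
    have := mB_decomp n t t; rw [this] at htt
    simpa [hA, sq] using htt
  have h2 : (∑ i : Fin (n+1), t i.castSucc * x i.castSucc)
      = t (Fin.last (n+1)) * x (Fin.last (n+1)) := by
    have := mB_decomp n t x; rw [this] at htx; linarith
  have hCS := Finset.sum_mul_sq_le_sq_mul_sq Finset.univ
    (fun i : Fin (n+1) => t i.castSucc) (fun i : Fin (n+1) => x i.castSucc)
  rw [h2] at hCS
  rw [mB_decomp]
  have hgoal : x (Fin.last (n+1)) ^ 2 < Bs ∨
      ((∀ i : Fin (n+1), x i.castSucc = 0) ∧ x (Fin.last (n+1)) = 0) := by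
    rcases eq_or_lt_of_le hBnn with hB0 | hBpos
    · right
      have hall : ∀ i : Fin (n+1), x i.castSucc = 0 := by
        intro i
        have h := (Finset.sum_eq_zero_iff_of_nonneg
          (fun i (_ : i ∈ (Finset.univ : Finset (Fin (n+1)))) =>
            sq_nonneg (x (Fin.castSucc i)))).mp hB0.symm i (Finset.mem_univ i)
        exact pow_eq_zero_iff two_ne_zero |>.mp h
      refine ⟨hall, ?_⟩
      have hsum0 : (∑ i : Fin (n+1), t i.castSucc * x i.castSucc) = 0 :=
        Finset.sum_eq_zero fun i _ => by rw [hall i, mul_zero]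
      have htL : t (Fin.last (n+1)) ≠ 0 := by
        intro h; rw [h] at h1; nlinarith
      have := h2.symm.trans hsum0
      exact (mul_eq_zero.mp this).resolve_left htL
    · left
      nlinarith [sq_nonneg (t (Fin.last (n+1)))]
  rcases hgoal with h | ⟨hall, hxL⟩
  · simp only [← sq]; rw [← hB]; linarith
  · exfalso
    apply hx
    ext j
    refine Fin.lastCases ?_ ?_ j
    · simpa using hxL
    · intro i
      simpa using hall i

lemma mem_mperp_iff (n : ℕ) (S : Submodule ℝ (Fin (n+2) → ℝ)) (x : Fin (n+2) → ℝ) :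
    x ∈ mperp n S ↔ ∀ s ∈ S, mB n x s = 0 := Iff.rfl

/-- If the Minkowski form is positive definite on `U ∩ W` (case 1), the
subspheres defined by `W` and `U` can be separated by a pair of disjoint
hyperspheres: there are unit vectors `n ∈ W^⊥`, `m ∈ U^⊥` with `(B n m)² > 1`. -/
theorem separating_hyperspheres_exist
    (n : ℕ) (hn : 0 < n) (W U : Submodule ℝ (Fin (n+2) → ℝ))
    (hW : IsPseudoEuclidean n W) (hU : IsPseudoEuclidean n U)
    (hsum : W ⊔ U = ⊤) (hWtop : W ≠ ⊤) (hUtop : U ≠ ⊤)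
    (hpos : ∀ x ∈ U ⊓ W, x ≠ 0 → 0 < mB n x x) :
    ∃ nv ∈ mperp n W, ∃ mv ∈ mperp n U,
      mB n nv nv = 1 ∧ mB n mv mv = 1 ∧ 1 < (mB n nv mv)^2 := by
  classical
  have hrefl : LinearMap.IsRefl (mB n) := fun x y h => by rwa [mB_symm]
  have hnd := mB_nondeg n
  have hperp : ∀ S : Submodule ℝ (Fin (n+2) → ℝ),
      mperp n S = LinearMap.BilinForm.orthogonal (mB n) S := by
    intro S
    ext x
    rw [LinearMap.BilinForm.mem_orthogonal_iff]
    constructor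
    · intro hx s hs
      exact hrefl _ _ (hx s hs)
    · intro hx s hs
      exact hrefl _ _ (hx s hs)
  -- positive definiteness of the orthogonal complements
  have hperpW : ∀ x ∈ mperp n W, x ≠ 0 → 0 < mB n x x := by
    obtain ⟨t, htW, htt⟩ := hW.2
    intro x hxp hx0
    exact spacelike_of_ortho_timelike n t x htt
      (by rw [mB_symm]; exact hxp t htW) hx0
  have hperpU : ∀ x ∈ mperp n U, x ≠ 0 → 0 < mB n x x := by
    obtain ⟨t, htU, htt⟩ := hU.2
    intro x hxp hx0
    exact spacelike_of_ortho_timelike n t x htt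
      (by rw [mB_symm]; exact hxp t htU) hx0
  -- perps intersect trivially
  have hinf : mperp n W ⊓ mperp n U = ⊥ := by
    rw [eq_bot_iff]
    rintro x ⟨hxW, hxU⟩
    have hall : ∀ y, mB n x y = 0 := by
      intro y
      have hy : y ∈ W ⊔ U := hsum ▸ Submodule.mem_top
      rcases Submodule.mem_sup.mp hy with ⟨w, hw, u, hu, rfl⟩
      rw [map_add, hxW w hw, hxU u hu, add_zero]
    simpa using hnd.1 x hall
  -- `U ⊓ W` is nondegenerate (it is positive definite)
  have hPnd : LinearMap.BilinForm.Nondegenerate (LinearMap.BilinForm.restrict (mB n) (U ⊓ W)) := by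
    have hPL : LinearMap.SeparatingLeft (LinearMap.BilinForm.restrict (mB n) (U ⊓ W)) := by
      rintro ⟨x, hx⟩ h
      have hx0 : x = 0 := by
        by_contra h0
        have := h ⟨x, hx⟩
        simp only [LinearMap.BilinForm.restrict_apply] at this
        exact absurd this (ne_of_gt (hpos x hx h0))
      exact Subtype.ext hx0
    refine ⟨hPL, fun y hy => hPL y fun x => ?_⟩
    have := hy x
    simp only [LinearMap.BilinForm.restrict_apply, LinearMap.domRestrict₁₂_apply, LinearMap.domRestrict_apply] at this ⊢
    rw [mB_symm]; exact this
  have hcompl := LinearMap.BilinForm.isCompl_orthogonal_of_restrict_nondegenerate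
    hrefl hPnd
  -- dimension bookkeeping
  have hVdim : Module.finrank ℝ (Fin (n+2) → ℝ) = n+2 := by
    simp [Module.finrank_fin_fun]
  have hWperp : Module.finrank ℝ (mperp n W) =
      (n+2) - Module.finrank ℝ W := by
    rw [hperp, LinearMap.BilinForm.finrank_orthogonal hnd, hVdim]
  have hUperp : Module.finrank ℝ (mperp n U) =
      (n+2) - Module.finrank ℝ U := by
    rw [hperp, LinearMap.BilinForm.finrank_orthogonal hnd, hVdim]
  have hPperp : Module.finrank ℝ (LinearMap.BilinForm.orthogonal (mB n) (U ⊓ W)) =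
      (n+2) - Module.finrank ℝ (U ⊓ W : Submodule ℝ _) := by
    rw [LinearMap.BilinForm.finrank_orthogonal hnd, hVdim]
  have hsumdim : Module.finrank ℝ (W ⊔ U : Submodule ℝ _) = n+2 := by
    rw [hsum]; exact (finrank_top ℝ _).trans hVdim
  have hWU := Submodule.finrank_sup_add_finrank_inf_eq W U
  have hWle := Submodule.finrank_le W
  have hUle := Submodule.finrank_le U
  have hPle := Submodule.finrank_le (U ⊓ W : Submodule ℝ _)
  have hsup := Submodule.finrank_sup_add_finrank_inf_eq (mperp n W) (mperp n U)
  rw [hinf, finrank_bot, add_zero] at hsup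
  rw [hVdim] at hWle hUle hPle
  -- the orthogonal of the intersection is the sum of the orthogonals
  have horthP : mperp n W ⊔ mperp n U = LinearMap.BilinForm.orthogonal (mB n) (U ⊓ W) := by
    apply Submodule.eq_of_le_of_finrank_le
    · rw [sup_le_iff]
      constructor
      · intro x hx
        rw [hperp] at hx
        rw [LinearMap.BilinForm.mem_orthogonal_iff]
        intro p hp
        exact hx p (Submodule.mem_inf.mp hp).2
      · intro x hx
        rw [hperp] at hx
        rw [LinearMap.BilinForm.mem_orthogonal_iff]
        intro p hp
        exact hx p (Submodule.mem_inf.mp hp).1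
    · rw [hPperp, hsup, hWperp, hUperp]
      have hinfWU : Module.finrank ℝ (U ⊓ W : Submodule ℝ _)
          = Module.finrank ℝ (W ⊓ U : Submodule ℝ _) := by rw [inf_comm]
      rw [hinfWU]
      omega
  -- produce a timelike vector in the orthogonal complement of `U ⊓ W`
  set e : Fin (n+2) → ℝ := Pi.single (Fin.last (n+1)) 1 with he
  have hee : mB n e e = -1 := by
    rw [mB_decomp]
    have h1 : e (Fin.last (n+1)) = 1 := by simp [he]
    have h2 : ∀ i : Fin (n+1), e i.castSucc = 0 := by
      intro i
      simp only [he, Pi.single_apply]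
      rw [if_neg]
      exact fun h => absurd (congrArg Fin.val h) (by simpa using i.isLt.ne)
    rw [h1]
    rw [Finset.sum_eq_zero fun i _ => by rw [h2 i, zero_mul]]
    ring
  obtain ⟨a, p, haP, hp, hape⟩ :=
    Submodule.codisjoint_iff_exists_add_eq.mp hcompl.codisjoint e
  have hap : mB n a p = 0 := hp a haP
  have hpa : mB n p a = 0 := hrefl _ _ hap
  have haa : 0 ≤ mB n a a := by
    rcases eq_or_ne a 0 with rfl | ha0
    · simp
    · exact (hpos a haP ha0).le
  have hpp : mB n p p < 0 := by
    have hexp : mB n e e = mB n a a + mB n a p + (mB n p a + mB n p p) := by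
      rw [← hape]; simp only [map_add, LinearMap.add_apply]; ring
    rw [hee, hap, hpa] at hexp
    linarith
  rw [← horthP] at hp
  rcases Submodule.mem_sup.mp hp with ⟨x, hxW, y, hyU, hxy⟩
  rw [← hxy] at hpp
  have hBxy : mB n (x + y) (x + y) = mB n x x + 2 * mB n x y + mB n y y := by
    simp only [map_add, LinearMap.add_apply]
    rw [mB_symm n y x]; ring
  rw [hBxy] at hpp
  have hx0 : x ≠ 0 := by
    rintro rfl
    simp only [map_zero, LinearMap.zero_apply, mul_zero, zero_add] at hpp
    rcases eq_or_ne y 0 with rfl | hy0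
    · simp at hpp
    · exact absurd hpp (not_lt.mpr (hperpU y hyU hy0).le)
  have hy0 : y ≠ 0 := by
    rintro rfl
    simp only [map_zero, mul_zero, add_zero] at hpp
    exact absurd hpp (not_lt.mpr (hperpW x hxW hx0).le)
  set A := mB n x x with hA
  set Bq := mB n y y with hB
  set C := mB n x y with hC
  have hApos : 0 < A := hperpW x hxW hx0
  have hBpos : 0 < Bq := hperpU y hyU hy0
  have hsA : Real.sqrt A > 0 := Real.sqrt_pos.mpr hApos
  have hsB : Real.sqrt Bq > 0 := Real.sqrt_pos.mpr hBpos
  have hsA2 : Real.sqrt A * Real.sqrt A = A := Real.mul_self_sqrt hApos.le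
  have hsB2 : Real.sqrt Bq * Real.sqrt Bq = Bq := Real.mul_self_sqrt hBpos.le
  refine ⟨(Real.sqrt A)⁻¹ • x, Submodule.smul_mem _ _ hxW,
    (Real.sqrt Bq)⁻¹ • y, Submodule.smul_mem _ _ hyU, ?_, ?_, ?_⟩
  · simp only [map_smul, LinearMap.smul_apply, smul_eq_mul, ← hA]
    field_simp
    rw [Real.sq_sqrt hApos.le]
  · simp only [map_smul, LinearMap.smul_apply, smul_eq_mul, ← hB]
    field_simp
    rw [Real.sq_sqrt hBpos.le]
  · simp only [map_smul, LinearMap.smul_apply, smul_eq_mul, ← hC]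
    have hC2 : A * Bq < C ^ 2 := by
      nlinarith [sq_nonneg (A - Bq), sq_nonneg (A + Bq + 2*C)]
    have h1 : ((Real.sqrt Bq)⁻¹ * ((Real.sqrt A)⁻¹ * C))^2 = C^2 / (A * Bq) := by
      rw [mul_pow, mul_pow, inv_pow, inv_pow, Real.sq_sqrt hBpos.le, Real.sq_sqrt hApos.le,
        div_eq_mul_inv, mul_inv]
      ring
    rw [h1, lt_div_iff₀ (by positivity)]
    linarith [hC2]
end
end
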